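/- Let H be a finite-dimensional complex Hilbert space and let {Pᵢ} be a finite family of mutually orthogonal projection operators on H (PᵢPⱼ = 0 for i ≠ j). Then for every operator x on H, Σᵢ ‖Pᵢ x Pᵢ‖₁ ≤ ‖x‖₁. -/

import Mathlib

open Matrix
open scoped Kronecker ComplexOrder

noncomputable def traceNorm {n : Type*} [Fintype n] [DecidableEq n] (A : Matrix n n ℂ) : ℝ :=
  ((Matrix.posSemidef_conjTranspose_mul_self A).1.eigenvectorUnitary.1 *
    diagonal (((↑) : ℝ → ℂ) ∘ (√·) ∘ (Matrix.posSemidef_conjTranspose_mul_self A).1.eigenvalues) *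
    (star (Matrix.posSemidef_conjTranspose_mul_self A).1.eigenvectorUnitary : Matrix n n ℂ)).trace.re

noncomputable def gammaNorm {m n : Type*} [Fintype m] [DecidableEq m] [Fintype n] [DecidableEq n]
    (t : Matrix (m × n) (m × n) ℂ) : ℝ :=
  sInf { c : ℝ | ∃ (r : ℕ) (u : Fin r → Matrix m m ℂ) (v : Fin r → Matrix n n ℂ),
    t = ∑ i, (u i) ⊗ₖ (v i) ∧ c = ∑ i, traceNorm (u i) * traceNorm (v i) }

def IsDensity {n : Type*} [Fintype n] (ρ : Matrix n n ℂ) : Prop :=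
  ρ.PosSemidef ∧ ρ.trace = 1

def evec {ι : Type*} (ψ : EuclideanSpace ℂ ι) : ι → ℂ := ψ

noncomputable def tensorVec {ι κ : Type*} (a : EuclideanSpace ℂ ι) (b : EuclideanSpace ℂ κ) :
    EuclideanSpace ℂ (ι × κ) :=
  (WithLp.equiv 2 _).symm (fun p => evec a p.1 * evec b p.2)

noncomputable def projOnto {ι : Type*} (ψ : EuclideanSpace ℂ ι) : Matrix ι ι ℂ :=
  Matrix.vecMulVec (evec ψ) (star (evec ψ))

/-! Trace-norm duality: `‖A‖₁` is the largest value of `Re tr (Cᴴ A)` over contractions `C`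
(`Cᴴ C ≤ 1`), and the polar part of `A` attains it. Choose such contractions `Wᵢ` for the blocks
`Pᵢ x Pᵢ`. Because the `Pᵢ` are mutually orthogonal, the block-diagonal operator `∑ Pᵢ Wᵢ Pᵢ` is
again a contraction, and pairing it with `x` gives exactly `∑ ‖Pᵢ x Pᵢ‖₁`. -/

open scoped MatrixOrder

section StarOrderedRing

variable {R ι : Type*}

theorem IsStarProjection.sum [NonUnitalNonAssocSemiring R] [StarRing R] {s : Finset ι}
    {P : ι → R} (hP : ∀ i ∈ s, IsStarProjection (P i))
    (horth : (s : Set ι).Pairwise fun i j => P i * P j = 0) :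
    IsStarProjection (∑ i ∈ s, P i) := by
  classical
  induction s using Finset.induction_on with
  | empty => simp [IsStarProjection.zero]
  | insert a s has ih =>
    rw [Finset.sum_insert has]
    refine (hP a (s.mem_insert_self a)).add
      (ih (fun i hi => hP i (Finset.mem_insert_of_mem hi)) (horth.mono (by simp))) ?_
    rw [Finset.mul_sum]
    refine Finset.sum_eq_zero fun j hj => horth (by simp) (by simp [hj]) ?_
    rintro rfl
    exact has hj

variable [Ring R] [PartialOrder R] [StarRing R] [StarOrderedRing R]

theorem star_mul_self_le_one_of_sum_compressions {s : Finset ι} {P C : ι → R}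
    (hP : ∀ i ∈ s, IsStarProjection (P i))
    (horth : (s : Set ι).Pairwise fun i j => P i * P j = 0)
    (hC : ∀ i ∈ s, star (C i) * C i ≤ 1) :
    star (∑ i ∈ s, P i * C i * P i) * (∑ i ∈ s, P i * C i * P i) ≤ 1 := by
  have hstar : ∀ i ∈ s, star (P i * C i * P i) = P i * star (C i) * P i := fun i hi => by
    simp only [star_mul, (hP i hi).isSelfAdjoint.star_eq, mul_assoc]
  have hblock : star (∑ i ∈ s, P i * C i * P i) * (∑ i ∈ s, P i * C i * P i)
      = ∑ i ∈ s, P i * (star (C i) * P i * C i) * P i := by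
    rw [star_sum, Finset.sum_mul_sum]
    refine Finset.sum_congr rfl fun i hi => ?_
    rw [Finset.sum_eq_single_of_mem i hi]
    · rw [hstar i hi, show P i * star (C i) * P i * (P i * C i * P i)
        = P i * star (C i) * (P i * P i) * C i * P i by simp only [mul_assoc],
        (hP i hi).isIdempotentElem.eq]
      simp only [mul_assoc]
    · intro j hj hji
      rw [hstar i hi, show P i * star (C i) * P i * (P j * C j * P j)
        = P i * star (C i) * (P i * P j) * C j * P j by simp only [mul_assoc],
        horth hi hj (Ne.symm hji)]
      simp
  calc star (∑ i ∈ s, P i * C i * P i) * (∑ i ∈ s, P i * C i * P i)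
      = ∑ i ∈ s, P i * (star (C i) * P i * C i) * P i := hblock
    _ ≤ ∑ i ∈ s, P i * 1 * P i := Finset.sum_le_sum fun i hi =>
        (hP i hi).isSelfAdjoint.conjugate_le_conjugate
          (((star_left_conjugate_le_conjugate (hP i hi).le_one (C i)).trans_eq
            (by rw [mul_one])).trans (hC i hi))
    _ = ∑ i ∈ s, P i := Finset.sum_congr rfl fun i hi => by
        rw [mul_one, (hP i hi).isIdempotentElem.eq]
    _ ≤ 1 := (IsStarProjection.sum hP horth).le_one

end StarOrderedRing

theorem Real.inv_sqrt_mul_mul_inv_sqrt_le_one (t : ℝ) : (√t)⁻¹ * t * (√t)⁻¹ ≤ 1 := by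
  rcases le_or_gt 0 t with ht | ht
  · rw [mul_right_comm, ← sq, inv_pow, Real.sq_sqrt ht, inv_mul_eq_div]
    exact div_self_le_one t
  · simp [Real.sqrt_eq_zero'.2 ht.le]

namespace Matrix

theorem norm_conjTranspose_mul_apply_le_sqrt_mul_sqrt {𝕜 m n : Type*} [RCLike 𝕜] [Fintype m]
    (X Y : Matrix m n 𝕜) (j : n) :
    ‖(Xᴴ * Y) j j‖ ≤ √(RCLike.re ((Xᴴ * X) j j)) * √(RCLike.re ((Yᴴ * Y) j j)) := by
  have hcol : ∀ Z V : Matrix m n 𝕜, (Zᴴ * V) j j = inner 𝕜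
      (WithLp.toLp 2 fun k => Z k j : EuclideanSpace 𝕜 m) (WithLp.toLp 2 fun k => V k j) := by
    intro Z V
    simp [mul_apply, EuclideanSpace.inner_eq_star_dotProduct, dotProduct, mul_comm]
  simp only [hcol, inner_self_eq_norm_sq, Real.sqrt_sq (norm_nonneg _)]
  exact norm_inner_le_norm _ _

theorem diagonal_ofReal_le_one {n : Type*} [DecidableEq n] {d : n → ℝ} (hd : ∀ i, d i ≤ 1) :
    diagonal (((↑) : ℝ → ℂ) ∘ d) ≤ 1 := by
  rw [le_iff, ← diagonal_one, diagonal_sub, posSemidef_diagonal_iff]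
  intro i
  simp only [Function.comp_apply, sub_nonneg]
  exact_mod_cast hd i

theorem IsHermitian.star_eigenvectorUnitary_mul_mul {n : Type*} [Fintype n] [DecidableEq n]
    {A : Matrix n n ℂ} (hA : A.IsHermitian) :
    star (hA.eigenvectorUnitary : Matrix n n ℂ) * A * hA.eigenvectorUnitary
      = diagonal (((↑) : ℝ → ℂ) ∘ hA.eigenvalues) := by
  simpa using hA.conjStarAlgAut_star_eigenvectorUnitary

end Matrix

section TraceNorm

variable {n : Type*} [Fintype n] [DecidableEq n]

theorem traceNorm_eq_sum_sqrt_eigenvalues (A : Matrix n n ℂ) :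
    traceNorm A = ∑ i, √((isHermitian_conjTranspose_mul_self A).eigenvalues i) := by
  rw [traceNorm, trace_mul_cycle, Unitary.coe_star_mul_self, one_mul, trace_diagonal,
    Complex.re_sum]
  simp

theorem re_trace_conjTranspose_mul_le_traceNorm {C : Matrix n n ℂ} (hC : Cᴴ * C ≤ 1)
    (A : Matrix n n ℂ) : (Cᴴ * A).trace.re ≤ traceNorm A := by
  set hA := isHermitian_conjTranspose_mul_self A
  set U : Matrix n n ℂ := (hA.eigenvectorUnitary : Matrix n n ℂ)
  have hUU : Uᴴ * U = 1 := Unitary.coe_star_mul_self _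
  have hUU' : U * Uᴴ = 1 := Unitary.coe_mul_star_self _
  have hCU : (C * U)ᴴ * (C * U) ≤ 1 :=
    calc (C * U)ᴴ * (C * U) = Uᴴ * (Cᴴ * C) * U := by simp only [conjTranspose_mul, mul_assoc]
      _ ≤ Uᴴ * 1 * U := star_left_conjugate_le_conjugate hC U
      _ = 1 := by rw [mul_one, hUU]
  have hAU : (A * U)ᴴ * (A * U) = diagonal (((↑) : ℝ → ℂ) ∘ hA.eigenvalues) := by
    rw [← hA.star_eigenvectorUnitary_mul_mul]
    simp only [conjTranspose_mul, mul_assoc]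
    rfl
  have htrace : (Cᴴ * A).trace = ((C * U)ᴴ * (A * U)).trace := by
    rw [conjTranspose_mul, show Uᴴ * Cᴴ * (A * U) = Uᴴ * (Cᴴ * A) * U by simp only [mul_assoc],
      trace_mul_cycle, hUU', one_mul]
  -- Cauchy–Schwarz column by column: the `j`-th column of `A * U` has norm `√λⱼ`, that of
  -- `C * U` norm at most `1`.
  rw [htrace, traceNorm_eq_sum_sqrt_eigenvalues, trace, Complex.re_sum]
  refine Finset.sum_le_sum fun j _ => ?_
  calc (((C * U)ᴴ * (A * U)) j j).re ≤ ‖((C * U)ᴴ * (A * U)) j j‖ := Complex.re_le_norm _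
    _ ≤ √(((C * U)ᴴ * (C * U)) j j).re * √(((A * U)ᴴ * (A * U)) j j).re :=
        norm_conjTranspose_mul_apply_le_sqrt_mul_sqrt _ _ j
    _ ≤ 1 * √(hA.eigenvalues j) := by
        rw [hAU]
        gcongr
        · simpa using (Complex.le_def.mp ((le_iff.mp hCU).diag_nonneg (i := j))).1
        · simp
    _ = √(hA.eigenvalues j) := one_mul _

theorem exists_re_trace_conjTranspose_mul_eq_traceNorm (A : Matrix n n ℂ) :
    ∃ W : Matrix n n ℂ, Wᴴ * W ≤ 1 ∧ (Wᴴ * A).trace.re = traceNorm A := by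
  set hA := isHermitian_conjTranspose_mul_self A
  set U : Matrix n n ℂ := (hA.eigenvectorUnitary : Matrix n n ℂ)
  have hUU' : U * Uᴴ = 1 := Unitary.coe_mul_star_self _
  have hdiag : Uᴴ * (Aᴴ * A) * U = diagonal (((↑) : ℝ → ℂ) ∘ hA.eigenvalues) :=
    hA.star_eigenvectorUnitary_mul_mul
  -- `G` is the pseudo-inverse of `|A|`: the junk value `0⁻¹ = 0` makes it vanish on `ker A`.
  set d : n → ℝ := fun j => (√(hA.eigenvalues j))⁻¹
  set D : Matrix n n ℂ := diagonal (((↑) : ℝ → ℂ) ∘ d)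
  set G : Matrix n n ℂ := U * D * Uᴴ
  have hG : Gᴴ = G :=
    (isHermitian_mul_mul_conjTranspose U
      (isHermitian_diagonal_iff.2 fun j => Complex.conj_ofReal (d j))).eq
  refine ⟨A * G, ?_, ?_⟩
  · calc (A * G)ᴴ * (A * G) = U * (D * (Uᴴ * (Aᴴ * A) * U) * D) * Uᴴ := by
          rw [conjTranspose_mul, hG]
          simp only [G, mul_assoc]
      _ = U * diagonal (((↑) : ℝ → ℂ) ∘ (d * hA.eigenvalues * d)) * Uᴴ := by
          rw [hdiag, diagonal_mul_diagonal, diagonal_mul_diagonal]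
          congr 3
          funext j
          simp
      _ ≤ U * 1 * Uᴴ := star_right_conjugate_le_conjugate
          (diagonal_ofReal_le_one fun j => Real.inv_sqrt_mul_mul_inv_sqrt_le_one _) U
      _ = 1 := by rw [mul_one, hUU']
  · calc ((A * G)ᴴ * A).trace.re = (D * (Uᴴ * (Aᴴ * A) * U)).trace.re := by
          rw [conjTranspose_mul, hG, show G * Aᴴ * A = U * (D * Uᴴ * (Aᴴ * A)) by
            simp only [G, mul_assoc], trace_mul_comm]
          simp only [mul_assoc]
      _ = traceNorm A := by
          rw [hdiag, diagonal_mul_diagonal, trace_diagonal, Complex.re_sum,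
            traceNorm_eq_sum_sqrt_eigenvalues]
          refine Finset.sum_congr rfl fun j _ => ?_
          simp [d, inv_mul_eq_div, Real.div_sqrt]

end TraceNorm

/-- For a finite family of mutually orthogonal projections Pᵢ,
`∑ i, ‖Pᵢ x Pᵢ‖₁ ≤ ‖x‖₁`. -/
theorem sum_traceNorm_compressions_le {n ι : Type*} [Fintype n] [DecidableEq n] [Fintype ι]
    (P : ι → Matrix n n ℂ)
    (hherm : ∀ i, (P i)ᴴ = P i) (hidem : ∀ i, P i * P i = P i)
    (horth : ∀ i j, i ≠ j → P i * P j = 0)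
    (x : Matrix n n ℂ) :
    ∑ i, traceNorm (P i * x * P i) ≤ traceNorm x := by
  choose W hW htrace using fun i => exists_re_trace_conjTranspose_mul_eq_traceNorm (P i * x * P i)
  have hcontr : (∑ i, P i * W i * P i)ᴴ * (∑ i, P i * W i * P i) ≤ 1 :=
    star_mul_self_le_one_of_sum_compressions (fun i _ => ⟨hidem i, hherm i⟩)
      (fun i _ j _ hij => horth i j hij) (fun i _ => hW i)
  calc ∑ i, traceNorm (P i * x * P i)
      = ((∑ i, P i * W i * P i)ᴴ * x).trace.re := by
        rw [conjTranspose_sum, Finset.sum_mul, trace_sum, Complex.re_sum]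
        refine Finset.sum_congr rfl fun i _ => ?_
        rw [← htrace i, conjTranspose_mul, conjTranspose_mul, hherm i,
          show P i * ((W i)ᴴ * P i) * x = P i * ((W i)ᴴ * P i * x) by simp only [mul_assoc],
          trace_mul_comm (P i)]
        simp only [mul_assoc]
    _ ≤ traceNorm x := re_trace_conjTranspose_mul_le_traceNorm hcontr x
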